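/- arXiv:2211.00440 — 5 statements merged into one kernel-verified Lean document; each statement's English description precedes it below -/
import Mathlib

section
/- For all integers k, setting p = 2k^2 + 22k - 7, q = 8(k+1)(k-2), r = 2(8k^2 - 2k + 17), s = 4(k^2 - k - 2), the identity q^2(p^2 + q^2) = s^2(r^2 + s^2) holds. -/
theorem stmt_1 (k : ℤ)
    (p : ℤ) (hp : p = 2*k^2 + 22*k - 7)
    (q : ℤ) (hq : q = 8*(k+1)*(k-2))
    (r : ℤ) (hr : r = 2*(8*k^2 - 2*k + 17))
    (s : ℤ) (hs : s = 4*(k^2 - k - 2)) :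
    q^2*(p^2 + q^2) = s^2*(r^2 + s^2) := by subst hp hq hr hs; ring
end

section
/- For all integers m, setting p = 2(50m^2 - 37m + 5), q = 2(10m^2 + 13m - 5), r = 3(3m - 1), s = 7m - 1, t = 10m - 1, u = 10m - 7, the identity p^4 - q^4 = m(r^4 - s^4)(t^4 - u^4) holds. -/
theorem stmt_4 (m : ℤ)
    (p : ℤ) (hp : p = 2*(50*m^2 - 37*m + 5))
    (q : ℤ) (hq : q = 2*(10*m^2 + 13*m - 5))
    (r : ℤ) (hr : r = 3*(3*m - 1))
    (s : ℤ) (hs : s = 7*m - 1)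
    (t : ℤ) (ht : t = 10*m - 1)
    (u : ℤ) (hu : u = 10*m - 7) :
    p^4 - q^4 = m*(r^4 - s^4)*(t^4 - u^4) := by subst hp hq hr hs ht hu; ring
end

section
/- For all integers u and v, setting a = u^3 - u^2·v + 2u·v^2 - v^3, b = v^3 + 2u^2·v - u·v^2 - u^3, c = u^3 - 2u^2·v + 2u·v^2, d = 2u^2·v - 2u·v^2 + v^3, the identity a^4 + b^4 + ab(a^2 + ab + b^2) = c^4 + d^4 + cd(c^2 + cd + d^2) holds. -/
theorem stmt_9 (u v : ℤ)
    (a : ℤ) (ha : a = u^3 - u^2*v + 2*u*v^2 - v^3)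
    (b : ℤ) (hb : b = v^3 + 2*u^2*v - u*v^2 - u^3)
    (c : ℤ) (hc : c = u^3 - 2*u^2*v + 2*u*v^2)
    (d : ℤ) (hd : d = 2*u^2*v - 2*u*v^2 + v^3) :
    a^4 + b^4 + a*b*(a^2 + a*b + b^2) = c^4 + d^4 + c*d*(c^2 + c*d + d^2) := by
  subst ha hb hc hd; ring
end

section
/- For all integers a, b, c, d with a^2 + ab + b^2 = c^2 + cd + d^2, the identity 45·((a^8 + b^8 + (a+b)^8) - (c^8 + d^8 + (c+d)^8))^2 = 64·((a^{10} + b^{10} + (a+b)^{10}) - (c^{10} + d^{10} + (c+d)^{10}))·((a^6 + b^6 + (a+b)^6) - (c^6 + d^6 + (c+d)^6)) holds. -/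
theorem stmt_11 (a b c d : ℤ) (h : a^2 + a*b + b^2 = c^2 + c*d + d^2) :
    45*((a^8 + b^8 + (a+b)^8) - (c^8 + d^8 + (c+d)^8))^2
      = 64*((a^10 + b^10 + (a+b)^10) - (c^10 + d^10 + (c+d)^10))
          *((a^6 + b^6 + (a+b)^6) - (c^6 + d^6 + (c+d)^6)) := by
  linear_combination ((-76)*(a^2+a*b+b^2)^7 + (-76)*(a^2+a*b+b^2)^6*(c^2+c*d+d^2) + (-76)*(a^2+a*b+b^2)^5*(c^2+c*d+d^2)^2 + (180)*(a^2+a*b+b^2)^4*(c^2+c*d+d^2)^3 + (-864)*(a^2+a*b+b^2)^4*(a^2*b^2*(a+b)^2) + (384)*(a^2+a*b+b^2)^4*(c^2*d^2*(c+d)^2) + (-180)*(a^2+a*b+b^2)^3*(c^2+c*d+d^2)^4 + (-864)*(a^2+a*b+b^2)^3*(c^2+c*d+d^2)*(a^2*b^2*(a+b)^2) + (-1056)*(a^2+a*b+b^2)^3*(c^2+c*d+d^2)*(c^2*d^2*(c+d)^2) + (76)*(a^2+a*b+b^2)^2*(c^2+c*d+d^2)^5 + (-864)*(a^2+a*b+b^2)^2*(c^2+c*d+d^2)^2*(a^2*b^2*(a+b)^2)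 + (864)*(a^2+a*b+b^2)^2*(c^2+c*d+d^2)^2*(c^2*d^2*(c+d)^2) + (76)*(a^2+a*b+b^2)*(c^2+c*d+d^2)^6 + (1056)*(a^2+a*b+b^2)*(c^2+c*d+d^2)^3*(a^2*b^2*(a+b)^2) + (864)*(a^2+a*b+b^2)*(c^2+c*d+d^2)^3*(c^2*d^2*(c+d)^2) + (2880)*(a^2+a*b+b^2)*(a^2*b^2*(a+b)^2)*(c^2*d^2*(c+d)^2) + (76)*(c^2+c*d+d^2)^7 + (-384)*(c^2+c*d+d^2)^4*(a^2*b^2*(a+b)^2) + (864)*(c^2+c*d+d^2)^4*(c^2*d^2*(c+d)^2) + (-2880)*(c^2+c*d+d^2)*(a^2*b^2*(a+b)^2)*(c^2*d^2*(c+d)^2)) * h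
end

section
/- For infinitely many quadruples of integers (a,b,c,d) (pairwise distinct), a^4 + b^4 + ab(a^2 + ab + b^2) = c^4 + d^4 + cd(c^2 + cd + d^2) holds; concretely, the map sending v to (a,b,c,d) with u = v+1 via the parametrization a = u^3 - u^2v + 2uv^2 - v^3, b = v^3 + 2u^2v - uv^2 - u^3, c = u^3 - 2u^2v + 2uv^2, d = 2u^2v - 2uv^2 + v^3 gives infinitely many solutions. -/
theorem stmt_16 :
    {T : ℤ × ℤ × ℤ × ℤ | ∃ v : ℤ, ∃ u : ℤ, u = v + 1 ∧
      T = (u^3 - u^2*v + 2*u*v^2 - v^3,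
           v^3 + 2*u^2*v - u*v^2 - u^3,
           u^3 - 2*u^2*v + 2*u*v^2,
           2*u^2*v - 2*u*v^2 + v^3)}.Infinite ∧
    ∀ a b c d : ℤ, (a, b, c, d) ∈
      {T : ℤ × ℤ × ℤ × ℤ | ∃ v : ℤ, ∃ u : ℤ, u = v + 1 ∧
        T = (u^3 - u^2*v + 2*u*v^2 - v^3,
             v^3 + 2*u^2*v - u*v^2 - u^3,
             u^3 - 2*u^2*v + 2*u*v^2,
             2*u^2*v - 2*u*v^2 + v^3)} →
      a^4 + b^4 + a*b*(a^2 + a*b + b^2) = c^4 + d^4 + c*d*(c^2 + c*d + d^2) := by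
  constructor
  · apply Set.infinite_of_injective_forall_mem
      (f := fun v : ℤ =>
        (((v+1)^3 - (v+1)^2*v + 2*(v+1)*v^2 - v^3,
          v^3 + 2*(v+1)^2*v - (v+1)*v^2 - (v+1)^3,
          (v+1)^3 - 2*(v+1)^2*v + 2*(v+1)*v^2,
          2*(v+1)^2*v - 2*(v+1)*v^2 + v^3) : ℤ × ℤ × ℤ × ℤ))
    · intro x y h
      simp only [Prod.mk.injEq] at h
      obtain ⟨h1, h2, h3, h4⟩ := h
      ring_nf at h1 h2 h3 h4
      nlinarith [h1, h2, h3, h4]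
    · intro v
      exact ⟨v, v + 1, rfl, rfl⟩
  · rintro a b c d ⟨v, u, hu, hT⟩
    simp only [Prod.mk.injEq] at hT
    obtain ⟨ha, hb, hc, hd⟩ := hT
    subst hu ha hb hc hd
    ring
end
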